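/- Let G be a thick spider with empty head, body K = {k1,...,kn} and feet S = {s1,...,sn}, si adjacent to kj iff i ≠ j. After deleting the edge set T = {{ki,sj} : i < j}, the neighbourhoods of the feet are nested: N(si) ⊂ N(sj) whenever i > j, and the resulting graph is P4-free. -/
import Mathlib


open SimpleGraph

/-- The four (distinct) vertices `a, b, c, d` induce a path `a - b - c - d` in `G`. -/
def IsInducedP4 {V : Type*} (G : SimpleGraph V) (a b c d : V) : Prop :=
  a ≠ b ∧ a ≠ c ∧ a ≠ d ∧ b ≠ c ∧ b ≠ d ∧ c ≠ d ∧
  G.Adj a b ∧ G.Adj b c ∧ G.Adj c d ∧ ¬ G.Adj a c ∧ ¬ G.Adj a d ∧ ¬ G.Adj b d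

/-- A graph is `P₄`-free if no four vertices induce a path on four vertices. -/
def P4Free {V : Type*} (G : SimpleGraph V) : Prop := ∀ a b c d : V, ¬ IsInducedP4 G a b c d

/-- The thick spider with empty head: body `K = {inl i}` is a clique, feet `S = {inr i}` form a
stable set, and `inl i` is adjacent to `inr j` iff `i ≠ j`. -/
def thickSpider (n : ℕ) : SimpleGraph (Fin n ⊕ Fin n) :=
  SimpleGraph.fromRel (fun a b =>
    match a, b with
    | Sum.inl i, Sum.inl j => i ≠ j
    | Sum.inl i, Sum.inr j => i ≠ j
    | Sum.inr _, _ => False)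

lemma memT_ll {n : ℕ} {T : Set (Sym2 (Fin n ⊕ Fin n))}
    (hT : T = {e | ∃ i j : Fin n, i < j ∧ e = s(Sum.inl i, Sum.inr j)})
    (i j : Fin n) : s(Sum.inl i, (Sum.inl j : Fin n ⊕ Fin n)) ∉ T := by
  subst hT; simp [Sym2.eq_iff]

lemma memT_lr {n : ℕ} {T : Set (Sym2 (Fin n ⊕ Fin n))}
    (hT : T = {e | ∃ i j : Fin n, i < j ∧ e = s(Sum.inl i, Sum.inr j)})
    (i j : Fin n) : s(Sum.inl i, (Sum.inr j : Fin n ⊕ Fin n)) ∈ T ↔ i < j := by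
  subst hT
  constructor
  · rintro ⟨i', j', h, he⟩
    rw [Sym2.eq_iff] at he
    rcases he with ⟨h1, h2⟩ | ⟨h1, h2⟩ <;> simp_all
  · intro h; exact ⟨i, j, h, rfl⟩

lemma memT_rl {n : ℕ} {T : Set (Sym2 (Fin n ⊕ Fin n))}
    (hT : T = {e | ∃ i j : Fin n, i < j ∧ e = s(Sum.inl i, Sum.inr j)})
    (i j : Fin n) : s(Sum.inr i, (Sum.inl j : Fin n ⊕ Fin n)) ∈ T ↔ j < i := by
  rw [Sym2.eq_swap]; exact memT_lr hT j i

lemma memT_rr {n : ℕ} {T : Set (Sym2 (Fin n ⊕ Fin n))}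
    (hT : T = {e | ∃ i j : Fin n, i < j ∧ e = s(Sum.inl i, Sum.inr j)})
    (i j : Fin n) : s(Sum.inr i, (Sum.inr j : Fin n ⊕ Fin n)) ∉ T := by
  subst hT; simp [Sym2.eq_iff]

lemma adj_iff' {n : ℕ} {T : Set (Sym2 (Fin n ⊕ Fin n))}
    (hT : T = {e | ∃ i j : Fin n, i < j ∧ e = s(Sum.inl i, Sum.inr j)})
    (a b : Fin n ⊕ Fin n) :
    ((SimpleGraph.fromRel (fun a b =>
      match a, b with
      | Sum.inl i, Sum.inl j => i ≠ j
      | Sum.inl i, Sum.inr j => i ≠ j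
      | Sum.inr _, _ => False)).deleteEdges T).Adj a b ↔
    (match a, b with
      | Sum.inl i, Sum.inl j => i ≠ j
      | Sum.inl i, Sum.inr j => (j : ℕ) < i
      | Sum.inr i, Sum.inl j => (i : ℕ) < j
      | Sum.inr _, Sum.inr _ => False) := by
  cases a with
  | inl i => cases b with
    | inl j =>
      rw [SimpleGraph.deleteEdges_adj, SimpleGraph.fromRel_adj]
      simp [memT_ll hT, Sum.inl.injEq]
      tauto
    | inr j =>
      rw [SimpleGraph.deleteEdges_adj, SimpleGraph.fromRel_adj, memT_lr hT]
      simp only [ne_eq, Sum.inl.injEq, reduceCtorEq, not_false_eq_true, true_and]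
      constructor
      · rintro ⟨h | h, hm⟩
        · omega
        · exact h.elim
      · intro h
        exact ⟨Or.inl (by omega), by omega⟩
  | inr i => cases b with
    | inl j =>
      rw [SimpleGraph.deleteEdges_adj, SimpleGraph.fromRel_adj, memT_rl hT]
      simp only [ne_eq, Sum.inr.injEq, reduceCtorEq, not_false_eq_true, true_and]
      constructor
      · rintro ⟨h | h, hm⟩
        · exact h.elim
        · omega
      · intro h
        exact ⟨Or.inr (by omega), by omega⟩
    | inr j =>
      rw [SimpleGraph.deleteEdges_adj, SimpleGraph.fromRel_adj]
      simp

/-- In the thick spider with empty head (`n ≥ 2`), after deleting the edge set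
`T = {{kᵢ, sⱼ} : i < j}`, the neighbourhoods of the feet are nested,
`N(sᵢ) ⊂ N(sⱼ)` whenever `i > j`, and the resulting graph is `P₄`-free. -/
theorem thickSpider_delete_T_nested_and_P4Free (n : ℕ) (hn : 2 ≤ n)
    (T : Set (Sym2 (Fin n ⊕ Fin n)))
    (hT : T = {e | ∃ i j : Fin n, i < j ∧ e = s(Sum.inl i, Sum.inr j)}) :
    (∀ i j : Fin n, j < i →
      ((thickSpider n).deleteEdges T).neighborSet (Sum.inr i) ⊂
        ((thickSpider n).deleteEdges T).neighborSet (Sum.inr j)) ∧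
    P4Free ((thickSpider n).deleteEdges T) := by
  have hadj : ∀ a b : Fin n ⊕ Fin n,
      ((thickSpider n).deleteEdges T).Adj a b ↔
      (match a, b with
        | Sum.inl i, Sum.inl j => i ≠ j
        | Sum.inl i, Sum.inr j => (j : ℕ) < i
        | Sum.inr i, Sum.inl j => (i : ℕ) < j
        | Sum.inr _, Sum.inr _ => False) := adj_iff' hT
  constructor
  · intro i j hij
    constructor
    · intro v hv
      rw [SimpleGraph.mem_neighborSet, hadj] at *
      cases v with
      | inl k => exact lt_trans (Fin.lt_iff_val_lt_val.mp hij) hv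
      | inr k => exact hv.elim
    · intro hcon
      have h1 : (Sum.inl i : Fin n ⊕ Fin n) ∈
          ((thickSpider n).deleteEdges T).neighborSet (Sum.inr j) := by
        rw [SimpleGraph.mem_neighborSet, hadj]; exact hij
      have h2 := hcon h1
      rw [SimpleGraph.mem_neighborSet, hadj] at h2
      omega
  · rintro a b c d ⟨hab, hac, had, hbc, hbd, hcd, Aab, Abc, Acd, Nac, Nad, Nbd⟩
    rw [hadj] at Aab Abc Acd Nac Nad Nbd
    cases a <;> cases b <;> cases c <;> cases d <;>
      simp only [ne_eq, Sum.inl.injEq, Sum.inr.injEq, Fin.ext_iff, reduceCtorEq,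
        not_false_eq_true] at Aab Abc Acd Nac Nad Nbd hab hac had hbc hbd hcd <;>
      omega
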